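/- arXiv:2405.09836 — 3 statements merged into one kernel-verified Lean document; each statement's English description precedes it below -/
import Mathlib

section
/- Let K be a field, G a finite simple connected graph, e an edge of G, and S a minimal generating set of binomials of I_G. Then I_G = I_{G_S^e} + I_{G∖e} (as ideals of K[x_e : e ∈ E(G)]). -/
open MvPolynomial

/-- The monomial `y_u * y_w` associated to the edge `e = {u, w}`. -/
noncomputable def edgeMon (K : Type) [Field K] {V : Type} (e : Sym2 V) :
    MvPolynomial V K :=
  Sym2.lift ⟨fun u w => X u * X w, fun u w => mul_comm _ _⟩ e

/-- The toric ideal `I_G` of a graph `G`, i.e. the kernel of the `K`-algebra map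
`K[x_e : e ∈ E(G)] → K[y_v : v ∈ V]`, sending `x_e ↦ y_u y_w` for `e = {u, w}`. -/
noncomputable def toricIdeal (K : Type) [Field K] {V : Type} (G : SimpleGraph V) :
    Ideal (MvPolynomial G.edgeSet K) :=
  RingHom.ker (MvPolynomial.aeval (fun e : G.edgeSet => edgeMon K (e : Sym2 V)) :
    MvPolynomial G.edgeSet K →ₐ[K] MvPolynomial V K)

/-- For a subgraph `H ≤ G`, the ideal of `K[x_e : e ∈ E(G)]` obtained by extending
the toric ideal `I_H` along the inclusion of variables `x_e` (`e ∈ E(H)`). -/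
noncomputable def extIdeal (K : Type) [Field K] {V : Type} (G H : SimpleGraph V)
    (h : H ≤ G) : Ideal (MvPolynomial G.edgeSet K) :=
  (toricIdeal K H).map
    (MvPolynomial.rename (Set.inclusion (SimpleGraph.edgeSet_mono h)) :
      MvPolynomial H.edgeSet K →ₐ[K] MvPolynomial G.edgeSet K)

/-- A subgraph splitting `I_G = I_{G₁} + I_{G₂}`, with `I_{G₁} ≠ I_G ≠ I_{G₂}`. -/
def IsSubgraphSplitting (K : Type) [Field K] {V : Type} (G G₁ G₂ : SimpleGraph V)
    (h₁ : G₁ ≤ G) (h₂ : G₂ ≤ G) : Prop :=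
  toricIdeal K G = extIdeal K G G₁ h₁ + extIdeal K G G₂ h₂ ∧
    extIdeal K G G₁ h₁ ≠ toricIdeal K G ∧ extIdeal K G G₂ h₂ ≠ toricIdeal K G

/-- `I_G` is subgraph splittable. -/
def SubgraphSplittable (K : Type) [Field K] {V : Type} (G : SimpleGraph V) : Prop :=
  ∃ (G₁ G₂ : SimpleGraph V) (h₁ : G₁ ≤ G) (h₂ : G₂ ≤ G),
    IsSubgraphSplitting K G G₁ G₂ h₁ h₂

/-- Alternating products: for a list `[e₁, …, e₂q]` the first component is
`x_{e₁} x_{e₃} ⋯` (odd positions) and the second is `x_{e₂} x_{e₄} ⋯` (even positions). -/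
noncomputable def altProd (K : Type) [Field K] {α : Type} :
    List α → MvPolynomial α K × MvPolynomial α K
  | [] => (1, 1)
  | a :: l => (X a * (altProd K l).2, (altProd K l).1)

/-- The edges of a walk in `G`, as a list of elements of `E(G)`. -/
def walkEdgeList {V : Type} {G : SimpleGraph V} {u v : V} (w : G.Walk u v) :
    List G.edgeSet :=
  w.edges.attachWith (· ∈ G.edgeSet) (fun _ he => w.edges_subset_edgeSet he)

/-- The binomial `B_w` of an even closed walk `w = (e_{i₁}, …, e_{i₂q})`:
`∏ x_{e_{i_{2k-1}}} - ∏ x_{e_{i_{2k}}}`. -/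
noncomputable def walkBinomial (K : Type) [Field K] {V : Type} {G : SimpleGraph V}
    {v : V} (w : G.Walk v v) : MvPolynomial G.edgeSet K :=
  (altProd K (walkEdgeList w)).1 - (altProd K (walkEdgeList w)).2

/-- `f` is a binomial of `I_G`, i.e. `f = B_w` for an even closed walk `w` of `G`. -/
def IsBinomial (K : Type) [Field K] {V : Type} (G : SimpleGraph V)
    (f : MvPolynomial G.edgeSet K) : Prop :=
  ∃ (v : V) (w : G.Walk v v), Even w.length ∧ f = walkBinomial K w

/-- `S` is a minimal generating set of binomials of the ideal `I`: all its members
are binomials `B_w`, it generates `I`, and no proper subset generates `I`. -/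
def IsMinBinomialGens (K : Type) [Field K] {V : Type} (G : SimpleGraph V)
    (S : Set (MvPolynomial G.edgeSet K)) (I : Ideal (MvPolynomial G.edgeSet K)) : Prop :=
  (∀ f ∈ S, IsBinomial K G f) ∧ Ideal.span S = I ∧
    ∀ T : Set (MvPolynomial G.edgeSet K), T ⊂ S → Ideal.span T ≠ I

/-- A family of even closed walks `w₁, …, w_r` of `G` (the data underlying a set of
binomials `S = {B_{w₁}, …, B_{w_r}}`). -/
structure BinomialWalkGens (K : Type) [Field K] {V : Type} (G : SimpleGraph V) where
  r : ℕ
  base : Fin r → V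
  walk : (i : Fin r) → G.Walk (base i) (base i)
  even : ∀ i, Even (walk i).length

namespace BinomialWalkGens

variable {K : Type} [Field K] {V : Type} {G : SimpleGraph V}

/-- The set of binomials `{B_{w₁}, …, B_{w_r}}`. -/
def binomials (S : BinomialWalkGens K G) : Set (MvPolynomial G.edgeSet K) :=
  Set.range fun i => walkBinomial K (S.walk i)

/-- `S = {B_{w₁}, …, B_{w_r}}` is a minimal generating set of binomials of `I`. -/
def IsMinGens (S : BinomialWalkGens K G) (I : Ideal (MvPolynomial G.edgeSet K)) : Prop :=
  IsMinBinomialGens K G S.binomials I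

/-- The subgraph `G_S^e` of `G`: the union of the walks `w_i` with `e ∈ E(w_i)`. -/
def GSe (S : BinomialWalkGens K G) (e : Sym2 V) : SimpleGraph V :=
  SimpleGraph.fromEdgeSet (⋃ i ∈ {i : Fin S.r | e ∈ (S.walk i).edges}, {f | f ∈ (S.walk i).edges})

lemma GSe_le (S : BinomialWalkGens K G) (e : Sym2 V) : S.GSe e ≤ G := by
  intro u w h
  rw [GSe, SimpleGraph.fromEdgeSet_adj] at h
  obtain ⟨hm, hne⟩ := h
  simp only [Set.mem_iUnion, Set.mem_setOf_eq] at hm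
  obtain ⟨i, -, hi⟩ := hm
  exact G.mem_edgeSet.mp ((S.walk i).edges_subset_edgeSet hi)

/-- The subgraph `G_S^F = ⋃_{e ∈ F} G_S^e` of `G`. -/
def GSF (S : BinomialWalkGens K G) (F : Set (Sym2 V)) : SimpleGraph V :=
  ⨆ e ∈ F, S.GSe e

lemma GSF_le (S : BinomialWalkGens K G) (F : Set (Sym2 V)) : S.GSF F ≤ G :=
  iSup₂_le fun e _ => S.GSe_le e

/-- The subgraph `G_S^v` of `G`: the union of the edge sets of the walks `w_i`
with `v ∈ V(w_i)`. -/
def GSv (S : BinomialWalkGens K G) (v : V) : SimpleGraph V :=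
  SimpleGraph.fromEdgeSet (⋃ i ∈ {i : Fin S.r | v ∈ (S.walk i).support}, {f | f ∈ (S.walk i).edges})

lemma GSv_le (S : BinomialWalkGens K G) (v : V) : S.GSv v ≤ G := by
  intro u w h
  rw [GSv, SimpleGraph.fromEdgeSet_adj] at h
  obtain ⟨hm, hne⟩ := h
  simp only [Set.mem_iUnion, Set.mem_setOf_eq] at hm
  obtain ⟨i, -, hi⟩ := hm
  exact G.mem_edgeSet.mp ((S.walk i).edges_subset_edgeSet hi)

end BinomialWalkGens

/-- `I_G` is edge splittable: there are an edge `e` of `G` and a minimal generating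
set of binomials `S` of `I_G` such that `I_G = I_{G_S^e} + I_{G∖e}` is a subgraph
splitting of `I_G`. -/
def EdgeSplittable (K : Type) [Field K] {V : Type} (G : SimpleGraph V) : Prop :=
  ∃ (e : Sym2 V) (_ : e ∈ G.edgeSet) (S : BinomialWalkGens K G),
    S.IsMinGens (toricIdeal K G) ∧
    IsSubgraphSplitting K G (S.GSe e) (G.deleteEdges {e}) (S.GSe_le e)
      (SimpleGraph.deleteEdges_le _)

/-- A minimal splitting: a subgraph splitting `I_G = I_{G₁} + I_{G₂}` admitting
minimal generating sets of binomials `S` of `I_{G₁}` and `T` of `I_{G₂}` such that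
`S ∪ T` is a minimal generating set of `I_G`. -/
def IsMinimalSplitting (K : Type) [Field K] {V : Type} (G G₁ G₂ : SimpleGraph V)
    (h₁ : G₁ ≤ G) (h₂ : G₂ ≤ G) : Prop :=
  IsSubgraphSplitting K G G₁ G₂ h₁ h₂ ∧
    ∃ S T : Set (MvPolynomial G.edgeSet K),
      IsMinBinomialGens K G S (extIdeal K G G₁ h₁) ∧
      IsMinBinomialGens K G T (extIdeal K G G₂ h₂) ∧
      IsMinBinomialGens K G (S ∪ T) (toricIdeal K G)

/-- A reduced splitting: a subgraph splitting `I_G = I_{G₁} + I_{G₂}` such that for all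
subgraphs `H₁ ⊆ G₁`, `H₂ ⊆ G₂` with `I_G = I_{H₁} + I_{H₂}` one has `I_{H₁} = I_{G₁}`
and `I_{H₂} = I_{G₂}`. -/
def IsReducedSplitting (K : Type) [Field K] {V : Type} (G G₁ G₂ : SimpleGraph V)
    (h₁ : G₁ ≤ G) (h₂ : G₂ ≤ G) : Prop :=
  IsSubgraphSplitting K G G₁ G₂ h₁ h₂ ∧
    ∀ (H₁ H₂ : SimpleGraph V) (hH₁ : H₁ ≤ G₁) (hH₂ : H₂ ≤ G₂),
      toricIdeal K G = extIdeal K G H₁ (hH₁.trans h₁) + extIdeal K G H₂ (hH₂.trans h₂) →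
      extIdeal K G H₁ (hH₁.trans h₁) = extIdeal K G G₁ h₁ ∧
        extIdeal K G H₂ (hH₂.trans h₂) = extIdeal K G G₂ h₂

/-- The wheel graph `W_{n+1}`: vertices `0, …, n-1` (the cycle `C_n`, with edges between
`i` and `(i+1) % n`) together with the universal vertex `n` joined to all cycle vertices. -/
def wheelGraph (n : ℕ) : SimpleGraph (Fin (n + 1)) :=
  SimpleGraph.fromRel fun u v =>
    (u.val < n ∧ v.val < n ∧ v.val = (u.val + 1) % n) ∨ (u.val = n ∧ v.val < n)


lemma myExtIdeal_le (K : Type) [Field K] {V : Type} (G H : SimpleGraph V) (h : H ≤ G) :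
    extIdeal K G H h ≤ toricIdeal K G := by
  rw [extIdeal, Ideal.map_le_iff_le_comap]
  intro f hf
  simp only [Ideal.mem_comap, toricIdeal, RingHom.mem_ker] at *
  rw [MvPolynomial.aeval_rename]
  exact hf

lemma myAltProd_map (K : Type) [Field K] {α β : Type} (g : α → β) (l : List α) :
    (rename g) (altProd K l).1 = (altProd K (l.map g)).1 ∧
    (rename g) (altProd K l).2 = (altProd K (l.map g)).2 := by
  induction l with
  | nil => simp [altProd]
  | cons a l ih => simp [altProd, ih.1, ih.2]

lemma myAttachWith_map {α : Type} {s t : Set α} (hst : s ⊆ t) (l : List α)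
    (h : ∀ a ∈ l, a ∈ s) :
    (l.attachWith (· ∈ s) h).map (Set.inclusion hst) =
      l.attachWith (· ∈ t) (fun a ha => hst (h a ha)) := by
  induction l with
  | nil => rfl
  | cons a l ih =>
    simp only [List.attachWith, List.pmap, List.map, List.cons.injEq]
    exact ⟨trivial, by simpa [List.attachWith] using ih (fun a ha => h a (List.mem_cons_of_mem _ ha))⟩

lemma myWalkEdgeList_transfer {V : Type} {G H : SimpleGraph V} (hHG : H ≤ G)
    {u v : V} (w : G.Walk u v) (hw : ∀ f ∈ w.edges, f ∈ H.edgeSet) :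
    (walkEdgeList (w.transfer H hw)).map (Set.inclusion (SimpleGraph.edgeSet_mono hHG)) =
      walkEdgeList w := by
  rw [walkEdgeList, walkEdgeList, myAttachWith_map (SimpleGraph.edgeSet_mono hHG)]
  have he := w.edges_transfer hw
  congr 1

lemma myRename_walkBinomial (K : Type) [Field K] {V : Type} {G H : SimpleGraph V}
    (hHG : H ≤ G) {v : V} (w : G.Walk v v) (hw : ∀ f ∈ w.edges, f ∈ H.edgeSet) :
    (rename (Set.inclusion (SimpleGraph.edgeSet_mono hHG)))
      (walkBinomial K (w.transfer H hw)) = walkBinomial K w := by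
  rw [walkBinomial, walkBinomial, map_sub,
    (myAltProd_map K _ _).1, (myAltProd_map K _ _).2,
    myWalkEdgeList_transfer hHG w hw]

lemma myAeval_altProd (K : Type) [Field K] {V : Type} {G : SimpleGraph V} {u v : V}
    (w : G.Walk u v) :
    (Even w.length →
      aeval (fun e : G.edgeSet => edgeMon K (e : Sym2 V)) (altProd K (walkEdgeList w)).1 * X v =
      aeval (fun e : G.edgeSet => edgeMon K (e : Sym2 V)) (altProd K (walkEdgeList w)).2 * X u) ∧
    (¬ Even w.length →
      aeval (fun e : G.edgeSet => edgeMon K (e : Sym2 V)) (altProd K (walkEdgeList w)).1 =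
      X u * X v * aeval (fun e : G.edgeSet => edgeMon K (e : Sym2 V)) (altProd K (walkEdgeList w)).2) := by
  induction w with
  | nil => simp [walkEdgeList, altProd]
  | @cons a b c h w ih =>
    have hlist : walkEdgeList (SimpleGraph.Walk.cons h w) =
        ⟨s(a, b), G.mem_edgeSet.mpr h⟩ :: walkEdgeList w := by
      exact List.attachWith_cons _
    constructor
    · intro hev
      have hodd : ¬ Even w.length := by
        rw [SimpleGraph.Walk.length_cons] at hev
        simpa [Nat.even_add_one] using hev
      rw [hlist]
      simp only [altProd, map_mul, aeval_X]
      rw [ih.2 hodd]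
      simp only [edgeMon, Sym2.lift_mk]
      ring
    · intro hodd
      have hev : Even w.length := by
        rw [SimpleGraph.Walk.length_cons] at hodd
        simpa [Nat.even_add_one] using hodd
      rw [hlist]
      simp only [altProd, map_mul, aeval_X]
      have hh := ih.1 hev
      simp only [edgeMon, Sym2.lift_mk] at hh ⊢
      linear_combination - X a * hh

lemma myWalkBinomial_mem (K : Type) [Field K] {V : Type} {G : SimpleGraph V} {v : V}
    (w : G.Walk v v) (hev : Even w.length) :
    walkBinomial K w ∈ toricIdeal K G := by
  rw [toricIdeal, RingHom.mem_ker]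
  show (aeval fun e : G.edgeSet => edgeMon K (e : Sym2 V)) (walkBinomial K w) = 0
  rw [walkBinomial, map_sub, sub_eq_zero]
  have h := (myAeval_altProd K w).1 hev
  exact mul_right_cancel₀ (MvPolynomial.X_ne_zero v) h

/-- Let `K` be a field, `G` a finite simple connected graph, `e` an edge
of `G`, and `S` a minimal generating set of binomials of `I_G`.
Then `I_G = I_{G_S^e} + I_{G∖e}` (as ideals of `K[x_e : e ∈ E(G)]`). -/
theorem toricIdeal_eq_extIdeal_GSe_add_extIdeal_deleteEdge
    (K : Type) [Field K] {V : Type} [Fintype V] [DecidableEq V]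
    (G : SimpleGraph V) (hG : G.Connected)
    (e : Sym2 V) (he : e ∈ G.edgeSet)
    (S : BinomialWalkGens K G) (hS : S.IsMinGens (toricIdeal K G)) :
    toricIdeal K G =
      extIdeal K G (S.GSe e) (S.GSe_le e) +
        extIdeal K G (G.deleteEdges {e}) (SimpleGraph.deleteEdges_le _) := by
  obtain ⟨-, hspan, -⟩ := hS
  apply le_antisymm
  · rw [← hspan, Ideal.span_le]
    intro f hf
    obtain ⟨i, rfl⟩ := hf
    rw [SetLike.mem_coe, Ideal.add_eq_sup]
    show walkBinomial K (S.walk i) ∈ _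
    by_cases hei : e ∈ (S.walk i).edges
    · apply Ideal.mem_sup_left
      have hsub : ∀ f ∈ (S.walk i).edges, f ∈ (S.GSe e).edgeSet := by
        intro f hf
        rw [BinomialWalkGens.GSe, SimpleGraph.edgeSet_fromEdgeSet]
        refine ⟨?_, G.not_isDiag_of_mem_edgeSet ((S.walk i).edges_subset_edgeSet hf)⟩
        simp only [Set.mem_iUnion, Set.mem_setOf_eq]
        exact ⟨i, hei, hf⟩
      rw [← myRename_walkBinomial K (S.GSe_le e) (S.walk i) hsub]
      exact Ideal.mem_map_of_mem _ (myWalkBinomial_mem K _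
        (by rw [SimpleGraph.Walk.length_transfer]; exact S.even i))
    · apply Ideal.mem_sup_right
      have hsub : ∀ f ∈ (S.walk i).edges, f ∈ (G.deleteEdges {e}).edgeSet := by
        intro f hf
        rw [SimpleGraph.edgeSet_deleteEdges]
        refine ⟨(S.walk i).edges_subset_edgeSet hf, ?_⟩
        rw [Set.mem_singleton_iff]
        rintro rfl
        exact hei hf
      rw [← myRename_walkBinomial K (SimpleGraph.deleteEdges_le _) (S.walk i) hsub]
      exact Ideal.mem_map_of_mem _ (myWalkBinomial_mem K _
        (by rw [SimpleGraph.Walk.length_transfer]; exact S.even i))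
  · rw [Ideal.add_eq_sup]
    exact sup_le (myExtIdeal_le K G _ _) (myExtIdeal_le K G _ _)
end

section
/- Let K be a field and G a finite simple connected graph. The toric ideal I_G is edge splittable if and only if there exist a minimal generating set of binomials S = {B_{w_1}, …, B_{w_r}} of I_G with r ≥ 2, an index i with 1 ≤ i ≤ r, and an edge e ∈ E(w_i) such that I_{G_S^e} ≠ I_G. -/
open MvPolynomial

set_option linter.unusedSectionVars false
set_option linter.unusedVariables false
section AllLemmas
section Lemmas
variable (K : Type) [Field K] {V : Type} {G : SimpleGraph V}

lemma walkEdgeList_nil {v : V} : walkEdgeList (G := G) (SimpleGraph.Walk.nil (u := v)) = [] := rfl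

lemma walkEdgeList_cons {u v w : V} (h : G.Adj u v) (p : G.Walk v w) :
    walkEdgeList (SimpleGraph.Walk.cons h p) =
      ⟨s(u, v), (G.mem_edgeSet).2 h⟩ :: walkEdgeList p := rfl

lemma walkEdgeList_map_val {u v : V} (p : G.Walk u v) :
    (walkEdgeList p).map Subtype.val = p.edges := by
  simp [walkEdgeList]

lemma aeval_edgeVar (f : G.edgeSet) {a b : V} (hf : (f : Sym2 V) = s(a, b)) :
    MvPolynomial.aeval (fun e : G.edgeSet => edgeMon K (e : Sym2 V))
      (X f : MvPolynomial G.edgeSet K) = X a * X b := by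
  simp [hf, edgeMon]

/-- Key parity invariant. -/
lemma aeval_altProd_walk {u v : V} (p : G.Walk u v) :
    (Even p.length →
      MvPolynomial.aeval (fun e : G.edgeSet => edgeMon K (e : Sym2 V))
        (altProd K (walkEdgeList p)).1 * X v =
      MvPolynomial.aeval (fun e : G.edgeSet => edgeMon K (e : Sym2 V))
        (altProd K (walkEdgeList p)).2 * X u) ∧
    (¬ Even p.length →
      MvPolynomial.aeval (fun e : G.edgeSet => edgeMon K (e : Sym2 V))
        (altProd K (walkEdgeList p)).1 =
      MvPolynomial.aeval (fun e : G.edgeSet => edgeMon K (e : Sym2 V))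
        (altProd K (walkEdgeList p)).2 * X u * X v) := by
  induction p with
  | nil => simp [walkEdgeList_nil, altProd]
  | @cons x x' y h q ih =>
    rw [walkEdgeList_cons]
    obtain ⟨ih1, ih2⟩ := ih
    constructor
    · intro hev
      have hq : ¬ Even q.length := by
        simp only [SimpleGraph.Walk.length_cons, Nat.even_add_one] at hev
        exact hev
      have := ih2 hq
      simp only [altProd, map_mul]
      rw [aeval_edgeVar K _ rfl, this]
      ring
    · intro hodd
      have hq : Even q.length := by
        simp only [SimpleGraph.Walk.length_cons, Nat.even_add_one, not_not] at hodd
        exact hodd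
      have := ih1 hq
      simp only [altProd, map_mul]
      rw [aeval_edgeVar K _ rfl]
      calc X x * X x' * (aeval fun e : G.edgeSet => edgeMon K (e : Sym2 V)) (altProd K (walkEdgeList q)).2
          = X x * ((aeval fun e : G.edgeSet => edgeMon K (e : Sym2 V)) (altProd K (walkEdgeList q)).2 * X x') := by ring
        _ = _ := by rw [← this]; ring

lemma walkBinomial_mem_toricIdeal {v : V} (w : G.Walk v v) (hw : Even w.length) :
    walkBinomial K w ∈ toricIdeal K G := by
  have h := (aeval_altProd_walk K w).1 hw
  have hX : (X v : MvPolynomial V K) ≠ 0 := MvPolynomial.X_ne_zero v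
  have := mul_right_cancel₀ hX h
  simp only [toricIdeal, RingHom.mem_ker, walkBinomial, map_sub]
  rw [this]; ring

end Lemmas

section Lemmas2
variable (K : Type) [Field K] {V : Type} {G : SimpleGraph V}

lemma rename_altProd {α β : Type} (σ : α → β) (l : List α) :
    (MvPolynomial.rename σ ((altProd K l).1 : MvPolynomial α K) = (altProd K (l.map σ)).1) ∧
    (MvPolynomial.rename σ ((altProd K l).2 : MvPolynomial α K) = (altProd K (l.map σ)).2) := by
  induction l with
  | nil => simp [altProd]
  | cons a l ih => simp [altProd, ih.1, ih.2]

lemma extIdeal_le_toricIdeal {H : SimpleGraph V} (h : H ≤ G) :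
    extIdeal K G H h ≤ toricIdeal K G := by
  rw [extIdeal, Ideal.map_le_iff_le_comap]
  intro p hp
  simp only [toricIdeal, RingHom.mem_ker] at hp ⊢
  show MvPolynomial.aeval _ (MvPolynomial.rename _ p) = 0
  rw [MvPolynomial.aeval_rename]
  exact hp

lemma walkBinomial_rename_transfer {H : SimpleGraph V} (h : H ≤ G) {v : V}
    (w : G.Walk v v) (hw : ∀ f ∈ w.edges, f ∈ H.edgeSet) :
    MvPolynomial.rename (Set.inclusion (SimpleGraph.edgeSet_mono h))
      (walkBinomial K (w.transfer H hw)) = walkBinomial K w := by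
  have hlist : (walkEdgeList (w.transfer H hw)).map
      (Set.inclusion (SimpleGraph.edgeSet_mono h)) = walkEdgeList w := by
    refine List.map_injective_iff.mpr (Subtype.val_injective (p := (· ∈ G.edgeSet))) ?_
    rw [List.map_map]
    have h1 : (Subtype.val ∘ Set.inclusion (SimpleGraph.edgeSet_mono h)) =
        (Subtype.val : H.edgeSet → Sym2 V) := rfl
    rw [h1, walkEdgeList_map_val, walkEdgeList_map_val, SimpleGraph.Walk.edges_transfer]
  simp only [walkBinomial, map_sub]
  rw [(rename_altProd K _ _).1, (rename_altProd K _ _).2, hlist]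

lemma walkBinomial_mem_extIdeal {H : SimpleGraph V} (h : H ≤ G) {v : V}
    (w : G.Walk v v) (hev : Even w.length) (hw : ∀ f ∈ w.edges, f ∈ H.edgeSet) :
    walkBinomial K w ∈ extIdeal K G H h := by
  rw [← walkBinomial_rename_transfer K h w hw]
  apply Ideal.mem_map_of_mem
  apply walkBinomial_mem_toricIdeal
  rwa [SimpleGraph.Walk.length_transfer]

end Lemmas2

section Lemmas3Prep
variable (K : Type) [Field K] {V : Type} {G : SimpleGraph V}

@[simp] lemma altProd_nil {α : Type} : altProd K ([] : List α) = (1, 1) := rfl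

@[simp] lemma altProd_cons {α : Type} (a : α) (l : List α) :
    altProd K (a :: l) = (X a * (altProd K l).2, (altProd K l).1) := rfl

lemma altProd_monomial {α : Type} [DecidableEq α] (l : List α) :
    ∃ d₁ d₂ : α →₀ ℕ, (altProd K l).1 = monomial d₁ 1 ∧ (altProd K l).2 = monomial d₂ 1 ∧
      ∀ x, d₁ x + d₂ x = l.count x := by
  induction l with
  | nil =>
    refine ⟨0, 0, ?_, ?_, by simp⟩ <;>
      simp [monomial_zero']
  | cons a l ih =>
    obtain ⟨d₁, d₂, h1, h2, hc⟩ := ih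
    refine ⟨Finsupp.single a 1 + d₂, d₁, ?_, ?_, ?_⟩
    · rw [altProd_cons]
      show X a * (altProd K l).2 = _
      rw [h2, X, monomial_mul, one_mul]
    · rw [altProd_cons]
      exact h1
    · intro x
      have := hc x
      rcases eq_or_ne x a with rfl | hne
      · simp only [List.count_cons_self, Finsupp.add_apply, Finsupp.single_eq_same]
        omega
      · rw [List.count_cons_of_ne (Ne.symm hne)]
        simp only [Finsupp.add_apply, Finsupp.single_apply,
          if_neg (fun h : a = x => hne h.symm)]
        omega

lemma altProd_isHomogeneous {α : Type} (l : List α) :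
    ((altProd K l).1).IsHomogeneous ((l.length + 1) / 2) ∧
      ((altProd K l).2).IsHomogeneous (l.length / 2) := by
  induction l with
  | nil =>
    refine ⟨?_, ?_⟩ <;> (rw [altProd_nil]; simpa using isHomogeneous_one α K)
  | cons a l ih =>
    rw [altProd_cons]
    constructor
    · show (X a * (altProd K l).2).IsHomogeneous _
      have h : ((a :: l).length + 1) / 2 = 1 + l.length / 2 := by
        simp only [List.length_cons]; omega
      rw [h]
      exact (isHomogeneous_X _ _).mul ih.2
    · show ((altProd K l).1).IsHomogeneous _
      have h : (a :: l).length / 2 = (l.length + 1) / 2 := by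
        simp only [List.length_cons]
      rw [h]
      exact ih.1

lemma walkBinomial_isHomogeneous {v : V} (w : G.Walk v v) (hev : Even w.length) :
    (walkBinomial K w).IsHomogeneous (w.length / 2) := by
  have hlen : (walkEdgeList w).length = w.length := by
    have := congrArg List.length (walkEdgeList_map_val w)
    simpa [SimpleGraph.Walk.length_edges] using this
  have h := altProd_isHomogeneous K (walkEdgeList w)
  obtain ⟨k, hk⟩ := hev
  have h1 : ((walkEdgeList w).length + 1) / 2 = w.length / 2 := by omega
  have h2 : (walkEdgeList w).length / 2 = w.length / 2 := by omega
  exact (h1 ▸ h.1).sub (h2 ▸ h.2)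

end Lemmas3Prep
section Lemmas4
variable (K : Type) [Field K] {V : Type} [DecidableEq V] {G : SimpleGraph V}

lemma edgeMon_ne_zero (e : Sym2 V) : edgeMon K e ≠ 0 := by
  induction e using Sym2.inductionOn with
  | hf a b => exact mul_ne_zero (X_ne_zero a) (X_ne_zero b)

lemma toricIdeal_isPrime : (toricIdeal K G).IsPrime :=
  RingHom.ker_isPrime _

lemma aeval_monomial_ne_zero (d : G.edgeSet →₀ ℕ) {c : K} (hc : c ≠ 0) :
    MvPolynomial.aeval (fun e : G.edgeSet => edgeMon K (e : Sym2 V))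
      (monomial d c) ≠ 0 := by
  rw [aeval_monomial]
  apply mul_ne_zero
  · simpa using hc
  · rw [Finsupp.prod]
    apply Finset.prod_ne_zero_iff.mpr
    intro e _
    exact pow_ne_zero _ (edgeMon_ne_zero K _)

lemma monomial_not_mem_toricIdeal (d : G.edgeSet →₀ ℕ) {c : K} (hc : c ≠ 0) :
    monomial d c ∉ toricIdeal K G := by
  intro h
  exact aeval_monomial_ne_zero K d hc h

lemma X_not_mem_toricIdeal (E : G.edgeSet) : (X E : MvPolynomial G.edgeSet K) ∉ toricIdeal K G := by
  rw [X]
  exact monomial_not_mem_toricIdeal K _ one_ne_zero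

/-- The substitution `x_E ↦ 0`. -/
noncomputable def phiMap (E : G.edgeSet) :
    MvPolynomial G.edgeSet K →ₐ[K] MvPolynomial G.edgeSet K :=
  MvPolynomial.aeval (fun f : G.edgeSet => if f = E then 0 else X f)

lemma phiMap_monomial (E : G.edgeSet) (d : G.edgeSet →₀ ℕ) :
    phiMap K E (monomial d (1 : K)) = if d E = 0 then monomial d 1 else 0 := by
  rw [phiMap, aeval_monomial]
  split_ifs with h
  · rw [monomial_eq]
    congr 1
    apply Finsupp.prod_congr
    intro f hf
    have : f ≠ E := fun hfE => by
      rw [hfE] at hf; exact (Finsupp.mem_support_iff.mp hf) h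
    rw [if_neg this]
  · have hE : E ∈ d.support := Finsupp.mem_support_iff.mpr h
    rw [Finsupp.prod]
    rw [Finset.prod_eq_zero hE (by rw [if_pos rfl]; exact zero_pow h)]
    ring

lemma phiMap_fixes_span (E : G.edgeSet) (s : Set (MvPolynomial G.edgeSet K))
    (hs : ∀ x ∈ s, phiMap K E x = x) {p : MvPolynomial G.edgeSet K}
    (hp : p ∈ Ideal.span s) : phiMap K E p ∈ Ideal.span s := by
  induction hp using Submodule.span_induction with
  | mem x hx => rw [hs x hx]; exact Ideal.subset_span hx
  | zero => simp
  | add x y _ _ hx hy => rw [map_add]; exact Ideal.add_mem _ hx hy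
  | smul r x _ hx =>
    rw [smul_eq_mul, map_mul]
    exact Ideal.mul_mem_left _ _ hx

lemma phiMap_mem_extIdeal {e : Sym2 V} (he : e ∈ G.edgeSet)
    {p : MvPolynomial G.edgeSet K}
    (hp : p ∈ extIdeal K G (G.deleteEdges {e}) (SimpleGraph.deleteEdges_le _)) :
    phiMap K (⟨e, he⟩ : G.edgeSet) p ∈
      extIdeal K G (G.deleteEdges {e}) (SimpleGraph.deleteEdges_le _) := by
  rw [extIdeal, Ideal.map] at hp ⊢
  apply phiMap_fixes_span K _ _ _ hp
  rintro x ⟨q, hq, rfl⟩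
  show phiMap K _ (MvPolynomial.rename _ q) = _
  rw [phiMap, MvPolynomial.aeval_rename]
  have hfun : ((fun f : G.edgeSet => if f = (⟨e, he⟩ : G.edgeSet) then (0 : MvPolynomial G.edgeSet K) else X f) ∘
      Set.inclusion (SimpleGraph.edgeSet_mono (SimpleGraph.deleteEdges_le (s := {e}) (G := G)))) =
      (X ∘ Set.inclusion (SimpleGraph.edgeSet_mono (SimpleGraph.deleteEdges_le _))) := by
    funext f
    have h2 : (↑f : Sym2 V) ∈ G.edgeSet \ {e} := by
      rw [← SimpleGraph.edgeSet_deleteEdges]; exact f.2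
    have hf : (f : Sym2 V) ≠ e := fun hc => h2.2 hc
    simp only [Function.comp_apply]
    have hne : ¬ (Set.inclusion (SimpleGraph.edgeSet_mono
        (SimpleGraph.deleteEdges_le (s := {e}) (G := G))) f = (⟨e, he⟩ : G.edgeSet)) :=
      fun hc => hf (congrArg Subtype.val hc)
    rw [if_neg hne]
  rw [hfun]
  have : MvPolynomial.aeval
      (X ∘ Set.inclusion (SimpleGraph.edgeSet_mono (SimpleGraph.deleteEdges_le (s := {e}) (G := G)))) q =
      MvPolynomial.rename (Set.inclusion (SimpleGraph.edgeSet_mono (SimpleGraph.deleteEdges_le _))) q := by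
    rw [← MvPolynomial.aeval_rename, aeval_X_left_apply]
  rw [this]

end Lemmas4

section Lemmas5
variable (K : Type) [Field K] {V : Type} [DecidableEq V] {G : SimpleGraph V}

lemma isBinomial_isHomogeneous {f : MvPolynomial G.edgeSet K} (hf : IsBinomial K G f) :
    ∃ n, f.IsHomogeneous n := by
  obtain ⟨v, w, hev, rfl⟩ := hf
  exact ⟨w.length / 2, walkBinomial_isHomogeneous K w hev⟩

lemma hc_mul_homog {g : MvPolynomial G.edgeSet K} {n : ℕ} (hg : g.IsHomogeneous n)
    (p : MvPolynomial G.edgeSet K) (q : ℕ) :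
    ∃ p', homogeneousComponent q (p * g) = p' * g ∧
      (n = q → p' = homogeneousComponent 0 p) := by
  classical
  have hp : p = ∑ m ∈ Finset.range (p.totalDegree + 1), homogeneousComponent m p :=
    (sum_homogeneousComponent p).symm
  refine ⟨∑ m ∈ Finset.range (p.totalDegree + 1),
    if q = m + n then homogeneousComponent m p else 0, ?_, ?_⟩
  · conv_lhs => rw [hp]
    rw [Finset.sum_mul, map_sum, Finset.sum_mul]
    apply Finset.sum_congr rfl
    intro m _
    have hhom : (homogeneousComponent m p * g).IsHomogeneous (m + n) :=
      (homogeneousComponent_isHomogeneous m p).mul hg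
    rw [homogeneousComponent_of_mem ((mem_homogeneousSubmodule _ _).mpr hhom)]
    rw [ite_mul, zero_mul]
  · intro hn
    subst hn
    have : ∀ m ∈ Finset.range (p.totalDegree + 1),
        (if n = m + n then homogeneousComponent m p else 0) =
          (if m = 0 then homogeneousComponent m p else 0) := by
      intro m _
      congr 1
      simp only [eq_iff_iff]
      omega
    rw [Finset.sum_congr rfl this, Finset.sum_ite_eq' (Finset.range (p.totalDegree + 1))
      (0 : ℕ) (fun m => homogeneousComponent m p)]
    rw [if_pos (Finset.mem_range.mpr (Nat.succ_pos _))]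

lemma span_diff_eq {S : Set (MvPolynomial G.edgeSet K)} {B : MvPolynomial G.edgeSet K}
    (hB : B ∈ S) (hmem : B ∈ Ideal.span (S \ {B})) :
    Ideal.span (S \ {B}) = Ideal.span S := by
  apply le_antisymm (Ideal.span_mono Set.diff_subset)
  rw [Ideal.span_le]
  intro x hx
  rcases eq_or_ne x B with rfl | hne
  · exact hmem
  · exact Ideal.subset_span ⟨hx, hne⟩

lemma min_gens_not_mem_diff {S : Set (MvPolynomial G.edgeSet K)}
    {I : Ideal (MvPolynomial G.edgeSet K)} (hmin : IsMinBinomialGens K G S I)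
    {B : MvPolynomial G.edgeSet K} (hB : B ∈ S) :
    B ∉ Ideal.span (S \ {B}) := by
  intro hmem
  exact hmin.2.2 (S \ {B}) (Set.sdiff_singleton_ssubset.mpr hB)
    ((span_diff_eq K hB hmem).trans hmin.2.1)

lemma zero_not_mem_min_gens {S : Set (MvPolynomial G.edgeSet K)}
    {I : Ideal (MvPolynomial G.edgeSet K)} (hmin : IsMinBinomialGens K G S I) :
    (0 : MvPolynomial G.edgeSet K) ∉ S := by
  intro h0
  exact min_gens_not_mem_diff K hmin h0 (Ideal.zero_mem _)

/-- A member of a minimal generating set cannot lie in `x_E · I`. -/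
lemma nakayama {S : Set (MvPolynomial G.edgeSet K)}
    {I : Ideal (MvPolynomial G.edgeSet K)} (hmin : IsMinBinomialGens K G S I)
    {B : MvPolynomial G.edgeSet K} (hB : B ∈ S) (hBne : B ≠ 0) (E : G.edgeSet)
    {h : MvPolynomial G.edgeSet K} (hh : h ∈ I) (hBeq : B = X E * h) : False := by
  classical
  obtain ⟨q, hq⟩ := isBinomial_isHomogeneous K (hmin.1 B hB)
  rw [← hmin.2.1] at hh
  obtain ⟨c, hcsupp, hcsum⟩ := Submodule.mem_span_set.mp hh
  have hBsum : B = ∑ g ∈ c.support, (X E * c g) * g := by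
    rw [hBeq, ← hcsum, Finsupp.sum, Finset.mul_sum]
    apply Finset.sum_congr rfl
    intro g _
    rw [smul_eq_mul]; ring
  have hBcomp : B = homogeneousComponent q B := by
    rw [homogeneousComponent_of_mem ((mem_homogeneousSubmodule _ _).mpr hq), if_pos rfl]
  have key : B = ∑ g ∈ c.support, homogeneousComponent q ((X E * c g) * g) := by
    conv_lhs => rw [hBcomp]
    rw [hBsum, map_sum]
  have hsummem : (∑ g ∈ c.support, homogeneousComponent q ((X E * c g) * g)) ∈
      Ideal.span (S \ {B}) := by
    apply Ideal.sum_mem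
    intro g hg
    have hgS : g ∈ S := hcsupp hg
    obtain ⟨n, hn⟩ := isBinomial_isHomogeneous K (hmin.1 g hgS)
    obtain ⟨p', hp', hp'0⟩ := hc_mul_homog K hn (X E * c g) q
    rw [hp']
    rcases eq_or_ne g B with rfl | hne
    · have hnq : n = q := IsHomogeneous.inj_right hn hq hBne
      rw [hp'0 hnq, homogeneousComponent_zero]
      have : coeff 0 (X E * c g) = 0 := by
        have : constantCoeff (X E * c g) = 0 := by
          rw [map_mul, constantCoeff_X, zero_mul]
        simpa [constantCoeff_eq] using this
      rw [this, map_zero, zero_mul]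
      exact Ideal.zero_mem _
    · exact Ideal.mul_mem_left _ _ (Ideal.subset_span ⟨hgS, hne⟩)
  exact min_gens_not_mem_diff K hmin hB (key.symm ▸ hsummem)

end Lemmas5

section Lemmas6
variable (K : Type) [Field K] {V : Type} [DecidableEq V] {G : SimpleGraph V}

lemma monomial_factor (d : G.edgeSet →₀ ℕ) (E : G.edgeSet) (hd : d E ≠ 0) :
    (monomial d (1 : K)) = X E * monomial (d - Finsupp.single E 1) 1 := by
  have hdd : Finsupp.single E 1 + (d - Finsupp.single E 1) = d := by
    ext x
    rcases eq_or_ne x E with rfl | hne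
    · simp only [Finsupp.add_apply, Finsupp.single_eq_same, Finsupp.tsub_apply]
      omega
    · simp only [Finsupp.add_apply, Finsupp.tsub_apply,
        Finsupp.single_apply, if_neg (fun hc : E = x => hne hc.symm)]
      omega
  rw [X, monomial_mul, one_mul, hdd]

lemma mem_walkEdgeList {u v : V} {w : G.Walk u v} {e : Sym2 V} (hew : e ∈ w.edges) :
    (⟨e, w.edges_subset_edgeSet hew⟩ : G.edgeSet) ∈ walkEdgeList w := by
  have h : e ∈ (walkEdgeList w).map Subtype.val := by
    rw [walkEdgeList_map_val]; exact hew
  obtain ⟨E', hE', hval⟩ := List.mem_map.mp h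
  have : E' = ⟨e, w.edges_subset_edgeSet hew⟩ := Subtype.ext hval
  exact this ▸ hE'

/-- If some walk of a minimal generating set goes through `e`, then `I_{G∖e} ≠ I_G`. -/
lemma extIdeal_deleteEdges_ne {S : Set (MvPolynomial G.edgeSet K)}
    (hmin : IsMinBinomialGens K G S (toricIdeal K G))
    {v : V} {w : G.Walk v v} (hev : Even w.length) (hBS : walkBinomial K w ∈ S)
    {e : Sym2 V} (hew : e ∈ w.edges) :
    extIdeal K G (G.deleteEdges {e}) (SimpleGraph.deleteEdges_le _) ≠ toricIdeal K G := by
  intro heq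
  have he : e ∈ G.edgeSet := w.edges_subset_edgeSet hew
  set E : G.edgeSet := ⟨e, he⟩ with hE
  set B := walkBinomial K w with hBdef
  have hBne : B ≠ 0 := fun h0 => zero_not_mem_min_gens K hmin (h0 ▸ hBS)
  have hBI : B ∈ toricIdeal K G := by
    rw [← hmin.2.1]; exact Ideal.subset_span hBS
  obtain ⟨d₁, d₂, h1, h2, hcount⟩ := altProd_monomial K (walkEdgeList w)
  have hBeq : B = monomial d₁ 1 - monomial d₂ 1 := by
    rw [hBdef, walkBinomial, h1, h2]
  have hEl : E ∈ walkEdgeList w := mem_walkEdgeList hew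
  have hcnt : 1 ≤ (walkEdgeList w).count E := List.count_pos_iff.mpr hEl
  have hab : 1 ≤ d₁ E + d₂ E := by rw [hcount E]; letI : BEq G.edgeSet := instBEqOfDecidableEq; exact List.count_pos_iff.mpr hEl
  rcases Nat.eq_zero_or_pos (d₁ E) with ha0 | ha1 <;>
    rcases Nat.eq_zero_or_pos (d₂ E) with hb0 | hb1
  · omega
  · -- a = 0, b ≥ 1 : φ B = monomial d₁ 1 ∈ I_G, contradiction
    have hφ : phiMap K E B ∈ toricIdeal K G :=
      heq ▸ phiMap_mem_extIdeal K he (heq.symm ▸ hBI)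
    rw [hBeq, map_sub, phiMap_monomial, phiMap_monomial, if_pos ha0,
      if_neg (by omega), sub_zero] at hφ
    exact monomial_not_mem_toricIdeal K d₁ one_ne_zero hφ
  · -- a ≥ 1, b = 0 : φ B = - monomial d₂ 1
    have hφ : phiMap K E B ∈ toricIdeal K G :=
      heq ▸ phiMap_mem_extIdeal K he (heq.symm ▸ hBI)
    rw [hBeq, map_sub, phiMap_monomial, phiMap_monomial, if_neg (by omega),
      if_pos hb0, zero_sub] at hφ
    exact monomial_not_mem_toricIdeal K d₂ one_ne_zero ((toricIdeal K G).neg_mem_iff.mp hφ)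
  · -- a ≥ 1, b ≥ 1 : B = X E * h, Nakayama
    have hfac : B = X E * (monomial (d₁ - Finsupp.single E 1) 1 -
        monomial (d₂ - Finsupp.single E 1) 1) := by
      rw [hBeq, monomial_factor K d₁ E (by omega), monomial_factor K d₂ E (by omega)]
      ring
    have hh : (monomial (d₁ - Finsupp.single E 1) 1 -
        monomial (d₂ - Finsupp.single E 1) (1 : K)) ∈ toricIdeal K G := by
      rcases (toricIdeal_isPrime K (G := G)).mem_or_mem (hfac ▸ hBI) with hc | hc
      · exact absurd hc (X_not_mem_toricIdeal K E)
      · exact hc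
    exact nakayama K hmin hBS hBne E hh hfac

end Lemmas6

end AllLemmas

section MainProof
variable {K : Type} [Field K] {V : Type} [DecidableEq V] {G : SimpleGraph V}

lemma mem_GSe_edgeSet (S : BinomialWalkGens K G) {e : Sym2 V} {j : Fin S.r}
    (hj : e ∈ (S.walk j).edges) {f : Sym2 V} (hf : f ∈ (S.walk j).edges) :
    f ∈ (S.GSe e).edgeSet := by
  rw [BinomialWalkGens.GSe, SimpleGraph.edgeSet_fromEdgeSet]
  refine ⟨?_, ?_⟩
  · exact Set.mem_biUnion hj hf
  · exact G.not_isDiag_of_mem_edgeSet ((S.walk j).edges_subset_edgeSet hf)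

lemma mem_deleteEdges_edgeSet {u : V} {w : G.Walk u u} {e : Sym2 V}
    (hnot : e ∉ w.edges) {f : Sym2 V} (hf : f ∈ w.edges) :
    f ∈ (G.deleteEdges {e}).edgeSet := by
  rw [SimpleGraph.edgeSet_deleteEdges]
  exact ⟨w.edges_subset_edgeSet hf, fun hc => hnot (hc ▸ hf)⟩

lemma binomial_mem_binomials (S : BinomialWalkGens K G) (j : Fin S.r) :
    walkBinomial K (S.walk j) ∈ S.binomials := ⟨j, rfl⟩

end MainProof

/-- `I_G` is edge splittable if and only if there exist a minimal
generating set of binomials `S = {B_{w₁}, …, B_{w_r}}` of `I_G` with `r ≥ 2`, an index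
`i` and an edge `e ∈ E(w_i)` such that `I_{G_S^e} ≠ I_G`. -/
theorem edgeSplittable_iff_exists_minGens
    (K : Type) [Field K] {V : Type} [Fintype V] [DecidableEq V]
    (G : SimpleGraph V) (hG : G.Connected) :
    EdgeSplittable K G ↔
      ∃ S : BinomialWalkGens K G, S.IsMinGens (toricIdeal K G) ∧ 2 ≤ S.r ∧
        ∃ (i : Fin S.r) (e : Sym2 V), e ∈ (S.walk i).edges ∧
          extIdeal K G (S.GSe e) (S.GSe_le e) ≠ toricIdeal K G := by
  constructor
  · rintro ⟨e, he, S, hminS, hsum, hne1, hne2⟩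
    have hex : ∃ i, e ∈ (S.walk i).edges := by
      by_contra hno
      push_neg at hno
      apply hne2
      apply le_antisymm (extIdeal_le_toricIdeal K _)
      rw [← hminS.2.1, Ideal.span_le]
      rintro f ⟨j, rfl⟩
      exact walkBinomial_mem_extIdeal K _ _ (S.even j)
        (fun f hf => mem_deleteEdges_edgeSet (hno j) hf)
    obtain ⟨i, hi⟩ := hex
    refine ⟨S, hminS, ?_, i, e, hi, hne1⟩
    by_contra hr
    push_neg at hr
    apply hne1
    apply le_antisymm (extIdeal_le_toricIdeal K _)
    rw [← hminS.2.1, Ideal.span_le]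
    rintro f ⟨j, rfl⟩
    have hj : j = i := by
      have h1 := j.isLt
      have h2 := i.isLt
      exact Fin.ext (by omega)
    subst hj
    exact walkBinomial_mem_extIdeal K _ _ (S.even j)
      (fun f hf => mem_GSe_edgeSet S hi hf)
  · rintro ⟨S, hminS, hr, i, e, he, hne⟩
    have heG : e ∈ G.edgeSet := (S.walk i).edges_subset_edgeSet he
    refine ⟨e, heG, S, hminS, ?_, hne, ?_⟩
    · apply le_antisymm
      · rw [← hminS.2.1, Ideal.span_le]
        rintro f ⟨j, rfl⟩
        rw [Submodule.add_eq_sup]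
        by_cases hej : e ∈ (S.walk j).edges
        · exact Ideal.mem_sup_left (walkBinomial_mem_extIdeal K _ _ (S.even j)
            (fun f hf => mem_GSe_edgeSet S hej hf))
        · exact Ideal.mem_sup_right (walkBinomial_mem_extIdeal K _ _ (S.even j)
            (fun f hf => mem_deleteEdges_edgeSet hej hf))
      · rw [Submodule.add_eq_sup]
        exact sup_le (extIdeal_le_toricIdeal K _) (extIdeal_le_toricIdeal K _)
    · exact extIdeal_deleteEdges_ne K hminS (S.even i) (binomial_mem_binomials S i) he
end

section
/- Let K be a field and let m, n ≥ 1 be integers. The toric ideal of the complete bipartite graph K_{m,n} is not subgraph splittable. -/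
open MvPolynomial

section AuxSplitting

open Finsupp

/-- vertex-pair exponent vector of an edge, pushed along `f`. -/
noncomputable def vtxF {V W : Type} (f : V → W) (e : Sym2 V) : W →₀ ℕ :=
  Sym2.lift ⟨fun u w => Finsupp.single (f u) 1 + Finsupp.single (f w) 1,
    fun u w => add_comm _ _⟩ e

lemma vtxF_mk {V W : Type} (f : V → W) (u w : V) :
    vtxF f s(u, w) = Finsupp.single (f u) 1 + Finsupp.single (f w) 1 := by
  simp [vtxF]

lemma X_mul_X {K : Type} [Field K] {E : Type} (a b : E) :
    (X a * X b : MvPolynomial E K)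
      = monomial (Finsupp.single a 1 + Finsupp.single b 1) 1 := by
  have h1 : (X a : MvPolynomial E K) = monomial (Finsupp.single a 1) 1 := rfl
  have h2 : (X b : MvPolynomial E K) = monomial (Finsupp.single b 1) 1 := rfl
  rw [h1, h2, monomial_mul, one_mul]

lemma edgeMon_eq_monomial {K : Type} [Field K] {V : Type} (e : Sym2 V) :
    edgeMon K e = monomial (vtxF id e) 1 := by
  induction e using Sym2.ind with
  | _ u w =>
    rw [edgeMon, Sym2.lift_mk, vtxF_mk]
    exact X_mul_X u w

lemma rename_edgeMon {K : Type} [Field K] {V W : Type} (f : V → W) (e : Sym2 V) :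
    rename f (edgeMon K e) = monomial (vtxF f e) 1 := by
  induction e using Sym2.ind with
  | _ u w =>
    rw [edgeMon, Sym2.lift_mk, map_mul, rename_X, rename_X, vtxF_mk]
    exact X_mul_X _ _

/-- the exponent-vector map induced by a monomial substitution `d`. -/
noncomputable def Dmap {E W : Type} (d : E → (W →₀ ℕ)) (α : E →₀ ℕ) : W →₀ ℕ :=
  α.sum fun e k => k • d e

lemma Dmap_add {E W : Type} (d : E → (W →₀ ℕ)) (α β : E →₀ ℕ) :
    Dmap d (α + β) = Dmap d α + Dmap d β :=
  Finsupp.sum_add_index' (fun e => zero_smul ℕ (d e)) (fun e k₁ k₂ => add_smul k₁ k₂ (d e))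

lemma Dmap_single {E W : Type} (d : E → (W →₀ ℕ)) (e : E) (k : ℕ) :
    Dmap d (Finsupp.single e k) = k • d e :=
  Finsupp.sum_single_index (zero_smul ℕ (d e))

lemma Dmap_apply {E W : Type} (d : E → (W →₀ ℕ)) (α : E →₀ ℕ) (x : W) :
    Dmap d α x = ∑ g ∈ α.support, α g * d g x := by
  rw [Dmap, Finsupp.sum_apply, Finsupp.sum]
  exact Finset.sum_congr rfl fun g _ => by rw [Finsupp.smul_apply, smul_eq_mul]

lemma Dmap_le {E W : Type} (d : E → (W →₀ ℕ)) (α : E →₀ ℕ) (e : E) (x : W) :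
    α e * d e x ≤ Dmap d α x := by
  rw [Dmap_apply]
  by_cases he : α e = 0
  · simp [he]
  · exact Finset.single_le_sum (f := fun g => α g * d g x) (fun _ _ => Nat.zero_le _)
      (Finsupp.mem_support_iff.mpr he)

lemma Dmap_pt {E W : Type} (d : E → (W →₀ ℕ)) (α : E →₀ ℕ) (e : E) (x : W)
    (hc : ∀ g, g ≠ e → d g x = 0) :
    Dmap d α x = α e * d e x := by
  rw [Dmap_apply]
  apply Finset.sum_eq_single
  · intro b _ hb; rw [hc b hb, mul_zero]
  · intro h; rw [Finsupp.notMem_support_iff.mp h, zero_mul]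

lemma aeval_monomial_mon {K : Type} [Field K] {E W : Type} (d : E → (W →₀ ℕ))
    (α : E →₀ ℕ) (c : K) :
    aeval (fun e => (monomial (d e) 1 : MvPolynomial W K)) (monomial α c)
      = monomial (Dmap d α) c := by
  induction α using Finsupp.induction with
  | zero => simp [Dmap]
  | single_add e k f hef hk ih =>
    have h1 : (monomial (Finsupp.single e k + f) c : MvPolynomial E K)
        = (X e ^ k) * monomial f c := by
      rw [X_pow_eq_monomial, monomial_mul, one_mul]
    rw [h1, map_mul, map_pow, aeval_X, ih, monomial_pow, one_pow, monomial_mul, one_mul,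
      Dmap_add, Dmap_single]

lemma ker_coeff {K : Type} [Field K] {E W : Type} (d : E → (W →₀ ℕ)) (p : MvPolynomial E K)
    (hp : aeval (fun e => (monomial (d e) 1 : MvPolynomial W K)) p = 0)
    (μ : E →₀ ℕ) (hfib : ∀ α, Dmap d α = Dmap d μ → α = μ) :
    coeff μ p = 0 := by
  classical
  have h0 : aeval (fun e => (monomial (d e) 1 : MvPolynomial W K)) p
      = ∑ α ∈ p.support, monomial (Dmap d α) (coeff α p) := by
    conv_lhs => rw [p.as_sum]
    rw [map_sum]
    exact Finset.sum_congr rfl fun α _ => aeval_monomial_mon d α _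
  rw [h0] at hp
  have h2 := congrArg (coeff (Dmap d μ)) hp
  rw [coeff_sum, coeff_zero] at h2
  simp_rw [coeff_monomial] at h2
  have h3 : ∑ α ∈ p.support, (if α = μ then coeff α p else 0) = 0 := by
    refine Eq.trans (Finset.sum_congr rfl ?_) h2
    intro α _
    by_cases hh : α = μ
    · subst hh; simp
    · rw [if_neg hh, if_neg fun hD => hh (hfib α hD)]
  rw [Finset.sum_ite_eq'] at h3
  by_cases hmem : μ ∈ p.support
  · rwa [if_pos hmem] at h3
  · exact MvPolynomial.notMem_support_iff.mp hmem

end AuxSplitting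

section AuxSplitting2

open Finsupp

open Classical in
/-- monomial substitution recording edges of `H` by their endpoints and other
edges of `G` by themselves. -/
noncomputable def dres {V : Type} (G H : SimpleGraph V) (e : G.edgeSet) :
    (V ⊕ G.edgeSet) →₀ ℕ :=
  if (e : Sym2 V) ∈ H.edgeSet then vtxF Sum.inl (e : Sym2 V)
  else Finsupp.single (Sum.inr e) 1

lemma extIdeal_le_ker {K : Type} [Field K] {V : Type} (G H : SimpleGraph V) (h : H ≤ G)
    (p : MvPolynomial G.edgeSet K) (hp : p ∈ extIdeal K G H h) :
    aeval (fun e : G.edgeSet =>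
      (monomial (dres G H e) 1 : MvPolynomial (V ⊕ G.edgeSet) K)) p = 0 := by
  classical
  set Φ : MvPolynomial G.edgeSet K →ₐ[K] MvPolynomial (V ⊕ G.edgeSet) K :=
    aeval (fun e : G.edgeSet =>
      (monomial (dres G H e) 1 : MvPolynomial (V ⊕ G.edgeSet) K)) with hΦ
  have hcomp : (Φ.comp (MvPolynomial.rename (Set.inclusion (SimpleGraph.edgeSet_mono h)) :
        MvPolynomial H.edgeSet K →ₐ[K] MvPolynomial G.edgeSet K))
      = ((rename Sum.inl : MvPolynomial V K →ₐ[K] MvPolynomial (V ⊕ G.edgeSet) K).comp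
          (aeval fun e : H.edgeSet => edgeMon K (e : Sym2 V))) := by
    apply MvPolynomial.algHom_ext
    intro e
    simp only [AlgHom.comp_apply, rename_X, aeval_X, hΦ]
    rw [rename_edgeMon]
    have hmem : ((Set.inclusion (SimpleGraph.edgeSet_mono h) e : G.edgeSet) : Sym2 V)
        ∈ H.edgeSet := e.2
    rw [dres, if_pos hmem]
  have hker : extIdeal K G H h ≤ RingHom.ker Φ := by
    rw [extIdeal]
    refine Ideal.map_le_iff_le_comap.mpr ?_
    intro f hf
    have hf0 : aeval (fun e : H.edgeSet => edgeMon K (e : Sym2 V)) f = 0 :=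
      RingHom.mem_ker.mp hf
    refine Ideal.mem_comap.mpr (RingHom.mem_ker.mpr ?_)
    have := congrArg (fun g : MvPolynomial H.edgeSet K →ₐ[K]
        MvPolynomial (V ⊕ G.edgeSet) K => g f) hcomp
    simp only [AlgHom.comp_apply] at this
    rw [this, hf0, map_zero]
  exact RingHom.mem_ker.mp (hker hp)

lemma extIdeal_self {K : Type} [Field K] {V : Type} (G : SimpleGraph V) (h : G ≤ G) :
    extIdeal K G G h = toricIdeal K G := by
  have hre : (MvPolynomial.rename (Set.inclusion (SimpleGraph.edgeSet_mono h)) :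
      MvPolynomial G.edgeSet K →ₐ[K] MvPolynomial G.edgeSet K) = AlgHom.id K _ := by
    apply MvPolynomial.algHom_ext
    intro e
    rw [rename_X, AlgHom.id_apply]
  rw [extIdeal, hre]
  apply le_antisymm
  · refine Ideal.map_le_iff_le_comap.mpr fun x hx => ?_
    simpa using hx
  · intro x hx
    exact Ideal.mem_map_of_mem _ hx

lemma toric_bot {K : Type} [Field K] {V : Type} (G : SimpleGraph V)
    (hv : ∀ e : G.edgeSet, ∃ v : V, (vtxF id (e : Sym2 V)) v = 1 ∧
      ∀ g : G.edgeSet, (vtxF id (g : Sym2 V)) v ≠ 0 → g = e) :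
    toricIdeal K G = ⊥ := by
  rw [eq_bot_iff]
  intro p hp
  rw [Ideal.mem_bot]
  have hp' : aeval (fun e : G.edgeSet =>
      (monomial (vtxF id (e : Sym2 V)) 1 : MvPolynomial V K)) p = 0 := by
    have hfun : (fun e : G.edgeSet => (monomial (vtxF id (e : Sym2 V)) (1 : K)
        : MvPolynomial V K)) = fun e : G.edgeSet => edgeMon K (e : Sym2 V) :=
      funext fun e => (edgeMon_eq_monomial _).symm
    rw [hfun]
    exact RingHom.mem_ker.mp hp
  apply MvPolynomial.ext
  intro μ
  rw [coeff_zero]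
  apply ker_coeff _ p hp' μ
  intro α hα
  ext e
  obtain ⟨v, hv1, hv2⟩ := hv e
  have hpt : ∀ β : G.edgeSet →₀ ℕ,
      Dmap (fun g : G.edgeSet => vtxF id (g : Sym2 V)) β v = β e := by
    intro β
    rw [Dmap_pt _ β e v, hv1, mul_one]
    intro g hg
    by_contra hne
    exact hg (hv2 g hne)
  have := congrArg (fun β : V →₀ ℕ => β v) hα
  rw [hpt α, hpt μ] at this
  exact this

lemma edge_form {m n : ℕ} {e : Sym2 (Fin m ⊕ Fin n)}
    (he : e ∈ (completeBipartiteGraph (Fin m) (Fin n)).edgeSet) :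
    ∃ i j, e = s(Sum.inl i, Sum.inr j) := by
  induction e using Sym2.ind with
  | _ u w =>
    rw [SimpleGraph.mem_edgeSet] at he
    rcases u with i | j <;> rcases w with i' | j'
    · simp [completeBipartiteGraph_adj] at he
    · exact ⟨i, j', rfl⟩
    · exact ⟨i', j, Sym2.eq_swap⟩
    · simp [completeBipartiteGraph_adj] at he

end AuxSplitting2

section AuxSplitting3

open Finsupp

open Classical in
lemma dres_apply_inl {V : Type} (G H : SimpleGraph V) (e : G.edgeSet)
    (u w : V) (he : (e : Sym2 V) = s(u, w)) (v : V) :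
    dres G H e (Sum.inl v)
      = if (e : Sym2 V) ∈ H.edgeSet
        then ((if u = v then 1 else 0) + (if w = v then 1 else 0)) else 0 := by
  classical
  rw [dres]
  by_cases hmem : (e : Sym2 V) ∈ H.edgeSet
  · rw [if_pos hmem, if_pos hmem, he, vtxF_mk, Finsupp.add_apply, Finsupp.single_apply,
      Finsupp.single_apply]
    simp
  · rw [if_neg hmem, if_neg hmem, Finsupp.single_apply]
    simp

open Classical in
lemma dres_apply_inr {V : Type} (G H : SimpleGraph V) (e : G.edgeSet)
    (u w : V) (he : (e : Sym2 V) = s(u, w)) (g : G.edgeSet) :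
    dres G H e (Sum.inr g)
      = if (e : Sym2 V) ∈ H.edgeSet then 0 else (if e = g then 1 else 0) := by
  classical
  rw [dres]
  by_cases hmem : (e : Sym2 V) ∈ H.edgeSet
  · rw [if_pos hmem, if_pos hmem, he, vtxF_mk, Finsupp.add_apply, Finsupp.single_apply,
      Finsupp.single_apply]
    simp
  · rw [if_neg hmem, if_neg hmem, Finsupp.single_apply]
    simp

abbrev GG (m n : ℕ) : SimpleGraph (Fin m ⊕ Fin n) :=
  completeBipartiteGraph (Fin m) (Fin n)

lemma fiber_lemma {m n : ℕ} (H : SimpleGraph (Fin m ⊕ Fin n))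
    (i k : Fin m) (j l : Fin n) (hik : i ≠ k) (hjl : j ≠ l)
    (a b c d : (GG m n).edgeSet)
    (ha : (a : Sym2 (Fin m ⊕ Fin n)) = s(Sum.inl i, Sum.inr j))
    (hb : (b : Sym2 (Fin m ⊕ Fin n)) = s(Sum.inl k, Sum.inr j))
    (hc : (c : Sym2 (Fin m ⊕ Fin n)) = s(Sum.inl k, Sum.inr l))
    (hd : (d : Sym2 (Fin m ⊕ Fin n)) = s(Sum.inl i, Sum.inr l))
    (hnot : (a : Sym2 (Fin m ⊕ Fin n)) ∉ H.edgeSet ∨ (b : Sym2 (Fin m ⊕ Fin n)) ∉ H.edgeSet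
      ∨ (c : Sym2 (Fin m ⊕ Fin n)) ∉ H.edgeSet ∨ (d : Sym2 (Fin m ⊕ Fin n)) ∉ H.edgeSet)
    (α : (GG m n).edgeSet →₀ ℕ)
    (hα : Dmap (dres (GG m n) H) α
        = Dmap (dres (GG m n) H)
            (Finsupp.single a 1 + Finsupp.single c 1)) :
    α = Finsupp.single a 1 + Finsupp.single c 1 := by
  classical
  -- pairwise distinctness of the four edges
  have hab : a ≠ b := by
    intro hh
    have := congrArg Subtype.val hh
    rw [ha, hb] at this
    simp [Sym2.eq_iff] at this
    exact hik this
  have hac : a ≠ c := by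
    intro hh
    have := congrArg Subtype.val hh
    rw [ha, hc] at this
    simp [Sym2.eq_iff] at this
    exact hik this.1
  have had : a ≠ d := by
    intro hh
    have := congrArg Subtype.val hh
    rw [ha, hd] at this
    simp [Sym2.eq_iff] at this
    exact hjl this
  have hbc : b ≠ c := by
    intro hh
    have := congrArg Subtype.val hh
    rw [hb, hc] at this
    simp [Sym2.eq_iff] at this
    exact hjl this
  have hbd : b ≠ d := by
    intro hh
    have := congrArg Subtype.val hh
    rw [hb, hd] at this
    simp [Sym2.eq_iff] at this
    exact hik this.1.symm
  have hcd : c ≠ d := by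
    intro hh
    have := congrArg Subtype.val hh
    rw [hc, hd] at this
    simp [Sym2.eq_iff] at this
    exact hik this.symm
  -- value of Dmap at μ
  have hDμ : Dmap (dres (GG m n) H) (Finsupp.single a 1 + Finsupp.single c 1) = dres (GG m n) H a + dres (GG m n) H c := by
    rw [Dmap_add, Dmap_single, Dmap_single, one_smul, one_smul]
  -- support of α is contained in the four edges
  have hsupp : ∀ g : (GG m n).edgeSet, α g ≠ 0 → g = a ∨ g = b ∨ g = c ∨ g = d := by
    intro g hg
    obtain ⟨x, y, hxy⟩ := edge_form g.2
    by_cases hgH : (g : Sym2 (Fin m ⊕ Fin n)) ∈ H.edgeSet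
    · have hx : x = i ∨ x = k := by
        have h1 : α g * dres (GG m n) H g (Sum.inl (Sum.inl x)) ≤ Dmap (dres (GG m n) H) α (Sum.inl (Sum.inl x)) :=
          Dmap_le _ _ _ _
        have h2 : dres (GG m n) H g (Sum.inl (Sum.inl x)) = 1 := by
          rw [dres_apply_inl (GG m n) H g _ _ hxy, if_pos hgH]
          simp
        rw [hα, hDμ, Finsupp.add_apply, dres_apply_inl (GG m n) H a _ _ ha,
          dres_apply_inl (GG m n) H c _ _ hc] at h1
        by_contra hcon
        push_neg at hcon
        obtain ⟨hxi, hxk⟩ := hcon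
        rw [h2, mul_one] at h1
        simp only [Sum.inl.injEq, reduceCtorEq] at h1
        rw [if_neg (fun hh : i = x => hxi hh.symm), if_neg (fun hh : k = x => hxk hh.symm)]
          at h1
        simp at h1
        omega
      have hy : y = j ∨ y = l := by
        have h1 : α g * dres (GG m n) H g (Sum.inl (Sum.inr y)) ≤ Dmap (dres (GG m n) H) α (Sum.inl (Sum.inr y)) :=
          Dmap_le _ _ _ _
        have h2 : dres (GG m n) H g (Sum.inl (Sum.inr y)) = 1 := by
          rw [dres_apply_inl (GG m n) H g _ _ hxy, if_pos hgH]
          simp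
        rw [hα, hDμ, Finsupp.add_apply, dres_apply_inl (GG m n) H a _ _ ha,
          dres_apply_inl (GG m n) H c _ _ hc] at h1
        by_contra hcon
        push_neg at hcon
        obtain ⟨hyj, hyl⟩ := hcon
        rw [h2, mul_one] at h1
        simp only [Sum.inr.injEq, reduceCtorEq] at h1
        rw [if_neg (fun hh : j = y => hyj hh.symm), if_neg (fun hh : l = y => hyl hh.symm)]
          at h1
        simp at h1
        omega
      rcases hx with rfl | rfl <;> rcases hy with rfl | rfl
      · exact Or.inl (Subtype.ext (hxy.trans ha.symm))
      · exact Or.inr (Or.inr (Or.inr (Subtype.ext (hxy.trans hd.symm))))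
      · exact Or.inr (Or.inl (Subtype.ext (hxy.trans hb.symm)))
      · exact Or.inr (Or.inr (Or.inl (Subtype.ext (hxy.trans hc.symm))))
    · have h1 : Dmap (dres (GG m n) H) α (Sum.inr g) = α g := by
        rw [Dmap_pt (dres (GG m n) H) α g (Sum.inr g)]
        · rw [dres_apply_inr (GG m n) H g _ _ hxy, if_neg hgH, if_pos rfl, mul_one]
        · intro g' hg'
          obtain ⟨x', y', hxy'⟩ := edge_form g'.2
          rw [dres_apply_inr (GG m n) H g' _ _ hxy']
          by_cases h' : (g' : Sym2 (Fin m ⊕ Fin n)) ∈ H.edgeSet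
          · rw [if_pos h']
          · rw [if_neg h', if_neg hg']
      rw [hα, hDμ, Finsupp.add_apply] at h1
      obtain ⟨xa, ya, hxya⟩ := edge_form a.2
      obtain ⟨xc, yc, hxyc⟩ := edge_form c.2
      rw [dres_apply_inr (GG m n) H a _ _ hxya, dres_apply_inr (GG m n) H c _ _ hxyc] at h1
      by_cases hga : a = g
      · exact Or.inl hga.symm
      · by_cases hgc : c = g
        · exact Or.inr (Or.inr (Or.inl hgc.symm))
        · rw [if_neg hga, if_neg hgc] at h1
          simp at h1
          exact absurd h1.symm hg
  -- decompose α
  have hαeq : α = Finsupp.single a (α a) + Finsupp.single b (α b)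
      + Finsupp.single c (α c) + Finsupp.single d (α d) := by
    ext g
    simp only [Finsupp.add_apply, Finsupp.single_apply]
    by_cases h1 : g = a
    · subst h1
      rw [if_pos rfl, if_neg (Ne.symm hab), if_neg (Ne.symm hac), if_neg (Ne.symm had)]
      omega
    · by_cases h2 : g = b
      · subst h2
        rw [if_neg hab, if_pos rfl, if_neg (Ne.symm hbc), if_neg (Ne.symm hbd)]
        omega
      · by_cases h3 : g = c
        · subst h3
          rw [if_neg hac, if_neg hbc, if_pos rfl, if_neg (Ne.symm hcd)]
          omega
        · by_cases h4 : g = d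
          · subst h4
            rw [if_neg had, if_neg hbd, if_neg hcd, if_pos rfl]
            omega
          · rw [if_neg (fun hh : a = g => h1 hh.symm), if_neg (fun hh : b = g => h2 hh.symm),
              if_neg (fun hh : c = g => h3 hh.symm), if_neg (fun hh : d = g => h4 hh.symm)]
            by_contra hcon
            rcases hsupp g (by omega) with hh | hh | hh | hh <;> tauto
  have hEq : (α a) • dres (GG m n) H a + (α b) • dres (GG m n) H b
      + (α c) • dres (GG m n) H c + (α d) • dres (GG m n) H d
      = dres (GG m n) H a + dres (GG m n) H c := by
    have h9 : Dmap (dres (GG m n) H) (Finsupp.single a (α a) + Finsupp.single b (α b)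
        + Finsupp.single c (α c) + Finsupp.single d (α d))
        = Dmap (dres (GG m n) H) (Finsupp.single a 1 + Finsupp.single c 1) := by
      rw [← hαeq]; exact hα
    rw [Dmap_add, Dmap_add, Dmap_add, Dmap_single, Dmap_single, Dmap_single, Dmap_single,
      hDμ] at h9
    exact h9
  have hcoord : ∀ x, (α a) * dres (GG m n) H a x + (α b) * dres (GG m n) H b x + (α c) * dres (GG m n) H c x + (α d) * dres (GG m n) H d x
      = dres (GG m n) H a x + dres (GG m n) H c x := by
    intro x
    have := DFunLike.congr_fun hEq x
    simpa [Finsupp.add_apply, Finsupp.smul_apply, smul_eq_mul] using this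
  have Erowi := hcoord (Sum.inl (Sum.inl i))
  have Erowk := hcoord (Sum.inl (Sum.inl k))
  have Ecolj := hcoord (Sum.inl (Sum.inr j))
  have Ecoll := hcoord (Sum.inl (Sum.inr l))
  have Ea := hcoord (Sum.inr a)
  have Eb := hcoord (Sum.inr b)
  have Ec := hcoord (Sum.inr c)
  have Ed := hcoord (Sum.inr d)
  rw [dres_apply_inl _ H a _ _ ha, dres_apply_inl _ H b _ _ hb, dres_apply_inl _ H c _ _ hc,
    dres_apply_inl _ H d _ _ hd] at Erowi Erowk Ecolj Ecoll
  rw [dres_apply_inr _ H a _ _ ha, dres_apply_inr _ H b _ _ hb, dres_apply_inr _ H c _ _ hc,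
    dres_apply_inr _ H d _ _ hd] at Ea Eb Ec Ed
  simp only [Sum.inl.injEq, Sum.inr.injEq, reduceCtorEq, if_true, if_false, ite_true,
    ite_false, hik, hjl, Ne.symm hik, Ne.symm hjl, hab, hac, had, hbc, hbd, hcd,
    Ne.symm hab, Ne.symm hac, Ne.symm had, Ne.symm hbc, Ne.symm hbd, Ne.symm hcd,
    if_pos rfl, ite_self, add_zero, zero_add, mul_zero, mul_one, mul_ite]
    at Erowi Erowk Ecolj Ecoll Ea Eb Ec Ed
  have hnot' : (if (a : Sym2 (Fin m ⊕ Fin n)) ∈ H.edgeSet then (1:ℕ) else 0) = 0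
      ∨ (if (b : Sym2 (Fin m ⊕ Fin n)) ∈ H.edgeSet then (1:ℕ) else 0) = 0
      ∨ (if (c : Sym2 (Fin m ⊕ Fin n)) ∈ H.edgeSet then (1:ℕ) else 0) = 0
      ∨ (if (d : Sym2 (Fin m ⊕ Fin n)) ∈ H.edgeSet then (1:ℕ) else 0) = 0 := by
    rcases hnot with h | h | h | h
    · exact Or.inl (if_neg h)
    · exact Or.inr (Or.inl (if_neg h))
    · exact Or.inr (Or.inr (Or.inl (if_neg h)))
    · exact Or.inr (Or.inr (Or.inr (if_neg h)))
  obtain ⟨h1, h2, h3, h4⟩ : α a = 1 ∧ α b = 0 ∧ α c = 1 ∧ α d = 0 := by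
    rcases hnot' with h | h | h | h <;>
      split_ifs at Erowi Erowk Ecolj Ecoll Ea Eb Ec Ed h <;> omega
  rw [hαeq, h1, h2, h3, h4, Finsupp.single_zero, Finsupp.single_zero]
  simp

end AuxSplitting3

lemma edgeMon_mk {K : Type} [Field K] {V : Type} (u w : V) :
    edgeMon K s(u, w) = X u * X w := by
  rw [edgeMon, Sym2.lift_mk]

/-- The toric ideal of the complete bipartite graph `K_{m,n}` is not
subgraph splittable. -/
theorem completeBipartite_not_subgraphSplittable
    (K : Type) [Field K] (m n : ℕ) (hm : 1 ≤ m) (hn : 1 ≤ n) :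
    ¬ SubgraphSplittable K (completeBipartiteGraph (Fin m) (Fin n)) := by
  classical
  rintro ⟨G₁, G₂, h₁, h₂, hsum, hne₁, hne₂⟩
  by_cases hm1 : m = 1
  · subst hm1
    have hbot : toricIdeal K (completeBipartiteGraph (Fin 1) (Fin n)) = ⊥ := by
      apply toric_bot
      intro e
      obtain ⟨x, y, hxy⟩ := edge_form e.2
      refine ⟨Sum.inr y, ?_, ?_⟩
      · rw [hxy, vtxF_mk]
        simp [Finsupp.single_apply]
      · intro g hg
        obtain ⟨x', y', hxy'⟩ := edge_form g.2
        rw [hxy', vtxF_mk] at hg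
        simp [Finsupp.single_apply] at hg
        apply Subtype.ext
        rw [hxy', hxy, Subsingleton.elim x' x, hg]
    apply hne₁
    have hle : extIdeal K (completeBipartiteGraph (Fin 1) (Fin n)) G₁ h₁
        ≤ toricIdeal K (completeBipartiteGraph (Fin 1) (Fin n)) := by
      rw [hsum, Submodule.add_eq_sup]; exact le_sup_left
    rw [hbot] at hle ⊢
    exact le_bot_iff.mp hle
  by_cases hn1 : n = 1
  · subst hn1
    have hbot : toricIdeal K (completeBipartiteGraph (Fin m) (Fin 1)) = ⊥ := by
      apply toric_bot
      intro e
      obtain ⟨x, y, hxy⟩ := edge_form e.2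
      refine ⟨Sum.inl x, ?_, ?_⟩
      · rw [hxy, vtxF_mk]
        simp [Finsupp.single_apply]
      · intro g hg
        obtain ⟨x', y', hxy'⟩ := edge_form g.2
        rw [hxy', vtxF_mk] at hg
        simp [Finsupp.single_apply] at hg
        apply Subtype.ext
        rw [hxy', hxy, Subsingleton.elim y' y, hg]
    apply hne₁
    have hle : extIdeal K (completeBipartiteGraph (Fin m) (Fin 1)) G₁ h₁
        ≤ toricIdeal K (completeBipartiteGraph (Fin m) (Fin 1)) := by
      rw [hsum, Submodule.add_eq_sup]; exact le_sup_left
    rw [hbot] at hle ⊢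
    exact le_bot_iff.mp hle
  -- main case : 2 ≤ m, 2 ≤ n
  have hG₁ : G₁ ≠ completeBipartiteGraph (Fin m) (Fin n) := by
    rintro rfl; exact hne₁ (extIdeal_self _ h₁)
  have hG₂ : G₂ ≠ completeBipartiteGraph (Fin m) (Fin n) := by
    rintro rfl; exact hne₂ (extIdeal_self _ h₂)
  obtain ⟨e₁, he₁G, he₁⟩ := Set.exists_of_ssubset
    (SimpleGraph.edgeSet_ssubset_edgeSet.mpr (lt_of_le_of_ne h₁ hG₁))
  obtain ⟨e₂, he₂G, he₂⟩ := Set.exists_of_ssubset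
    (SimpleGraph.edgeSet_ssubset_edgeSet.mpr (lt_of_le_of_ne h₂ hG₂))
  obtain ⟨i₁, j₁, rfl⟩ := edge_form he₁G
  obtain ⟨i₂, j₂, rfl⟩ := edge_form he₂G
  haveI : Nontrivial (Fin m) := ⟨⟨⟨0, by omega⟩, ⟨1, by omega⟩, by simp [Fin.ext_iff]⟩⟩
  haveI : Nontrivial (Fin n) := ⟨⟨⟨0, by omega⟩, ⟨1, by omega⟩, by simp [Fin.ext_iff]⟩⟩
  obtain ⟨k, hik, hk2⟩ : ∃ k, i₁ ≠ k ∧ (i₂ = i₁ ∨ i₂ = k) := by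
    by_cases hii : i₂ = i₁
    · obtain ⟨k, hk⟩ := exists_ne i₁
      exact ⟨k, Ne.symm hk, Or.inl hii⟩
    · exact ⟨i₂, fun hh => hii hh.symm, Or.inr rfl⟩
  obtain ⟨l, hjl, hl2⟩ : ∃ l, j₁ ≠ l ∧ (j₂ = j₁ ∨ j₂ = l) := by
    by_cases hjj : j₂ = j₁
    · obtain ⟨l, hl⟩ := exists_ne j₁
      exact ⟨l, Ne.symm hl, Or.inl hjj⟩
    · exact ⟨j₂, fun hh => hjj hh.symm, Or.inr rfl⟩
  have mem4 : ∀ (x : Fin m) (y : Fin n),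
      s(Sum.inl x, Sum.inr y) ∈ (completeBipartiteGraph (Fin m) (Fin n)).edgeSet := by
    intro x y
    rw [SimpleGraph.mem_edgeSet]
    simp [completeBipartiteGraph_adj]
  let a : (completeBipartiteGraph (Fin m) (Fin n)).edgeSet :=
    ⟨s(Sum.inl i₁, Sum.inr j₁), mem4 i₁ j₁⟩
  let b : (completeBipartiteGraph (Fin m) (Fin n)).edgeSet :=
    ⟨s(Sum.inl k, Sum.inr j₁), mem4 k j₁⟩
  let c : (completeBipartiteGraph (Fin m) (Fin n)).edgeSet :=
    ⟨s(Sum.inl k, Sum.inr l), mem4 k l⟩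
  let d : (completeBipartiteGraph (Fin m) (Fin n)).edgeSet :=
    ⟨s(Sum.inl i₁, Sum.inr l), mem4 i₁ l⟩
  have hB : (X a * X c - X b * X d :
      MvPolynomial (completeBipartiteGraph (Fin m) (Fin n)).edgeSet K)
      ∈ toricIdeal K (completeBipartiteGraph (Fin m) (Fin n)) := by
    simp only [toricIdeal, RingHom.mem_ker, map_sub, map_mul, aeval_X]
    rw [edgeMon_mk, edgeMon_mk, edgeMon_mk, edgeMon_mk]
    ring
  rw [hsum, Submodule.add_eq_sup] at hB
  obtain ⟨p, hp, q, hq, hpq⟩ := Submodule.mem_sup.mp hB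
  have hcp : coeff (Finsupp.single a 1 + Finsupp.single c 1) p = 0 := by
    apply ker_coeff _ p (extIdeal_le_ker (completeBipartiteGraph (Fin m) (Fin n)) G₁ h₁ p hp)
    intro β hβ
    exact fiber_lemma G₁ i₁ k j₁ l hik hjl a b c d rfl rfl rfl rfl (Or.inl he₁) β hβ
  have hcq : coeff (Finsupp.single a 1 + Finsupp.single c 1) q = 0 := by
    apply ker_coeff _ q (extIdeal_le_ker (completeBipartiteGraph (Fin m) (Fin n)) G₂ h₂ q hq)
    intro β hβ
    refine fiber_lemma G₂ i₁ k j₁ l hik hjl a b c d rfl rfl rfl rfl ?_ β hβ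
    rcases hk2 with rfl | rfl <;> rcases hl2 with rfl | rfl
    · exact Or.inl he₂
    · exact Or.inr (Or.inr (Or.inr he₂))
    · exact Or.inr (Or.inl he₂)
    · exact Or.inr (Or.inr (Or.inl he₂))
  have hba : b ≠ a := by
    intro hh
    have h9 := congrArg Subtype.val hh
    simp [a, b, Sym2.eq_iff] at h9
    exact hik h9.symm
  have hca : c ≠ a := by
    intro hh
    have h9 := congrArg Subtype.val hh
    simp [a, c, Sym2.eq_iff] at h9
    exact hik h9.1.symm
  have hda : d ≠ a := by
    intro hh
    have h9 := congrArg Subtype.val hh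
    simp [a, d, Sym2.eq_iff] at h9
    exact hjl h9.symm
  have hneq : Finsupp.single b 1 + Finsupp.single d 1
      ≠ Finsupp.single a 1 + Finsupp.single c 1 := by
    intro hh
    have h9 := DFunLike.congr_fun hh a
    rw [Finsupp.add_apply, Finsupp.add_apply, Finsupp.single_apply, Finsupp.single_apply,
      Finsupp.single_apply, Finsupp.single_apply, if_neg hba, if_neg hda, if_pos rfl,
      if_neg hca] at h9
    simp at h9
  have hone : coeff (Finsupp.single a 1 + Finsupp.single c 1)
      (X a * X c - X b * X d :
        MvPolynomial (completeBipartiteGraph (Fin m) (Fin n)).edgeSet K) = 1 := by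
    rw [MvPolynomial.coeff_sub, X_mul_X, X_mul_X, coeff_monomial, coeff_monomial,
      if_pos rfl, if_neg hneq]
    norm_num
  have h9 := congrArg (coeff (Finsupp.single a 1 + Finsupp.single c 1)) hpq
  rw [MvPolynomial.coeff_add, hcp, hcq, hone] at h9
  exact absurd h9 (by norm_num)
end
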